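/- Fix a real x > 0 and suppose c > 2. For each h > 0 small enough that c(1−π(h)) > 2, let K_h be a random variable with the beta-negative-binomial distribution BNB(x, cπ(h), c(1−π(h))). Then lim_{h→0+} h⁻¹·E[K_h] = x·r(t)·c/(c−1) and lim_{h→0+} h⁻¹·Var[K_h] = x²·r(t)·c/((c−1)(c−2)) + x·r(t)·c/(c−2). The ratio of these two limits is strictly greater than 1 for every x > 0 (infinitesimal over-dispersion). -/

import Mathlib

open scoped BigOperators
open Filter Topology Asymptotics

/-- The Beta function `B(a,b) = Γ(a)Γ(b)/Γ(a+b)`. -/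
noncomputable def betaFn (a b : ℝ) : ℝ := Real.Gamma a * Real.Gamma b / Real.Gamma (a + b)

/-- The pmf of the beta-negative-binomial distribution `BNB(x, α, β)`, obtained by
integrating the conditional pmf `P(K = k | Π) = [Γ(x+k)/(Γ(x)k!)]·Π^k(1−Π)^x` against
`Π ~ Beta(α,β)`: `P(K = k) = [Γ(x+k)/(Γ(x)k!)]·B(k+α, x+β)/B(α,β)`. -/
noncomputable def bnbPmf (x α β : ℝ) (k : ℕ) : ℝ :=
  Real.Gamma (x + (k : ℝ)) / (Real.Gamma x * (k.factorial : ℝ)) *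
    (betaFn ((k : ℝ) + α) (x + β) / betaFn α β)

/-- `π(h) = 1 − exp(−∫_t^{t+h} r(s) ds)`. -/
noncomputable def pih (r : ℝ → ℝ) (t h : ℝ) : ℝ :=
  1 - Real.exp (-(∫ s in t..(t + h), r s))

/-!
`BNB(x, α, β)` is a Beta mixture of negative binomial laws, so its normalisation reduces, by
monotone convergence, to the negative binomial series `∑ₖ C(x+k-1, k) yᵏ = (1 - y)^(-x)`
integrated against the Beta kernel. The shift identity
`(k+1) P_{x,α,β}(k+1) = xα/(β-1) · P_{x+1,α+1,β-1}(k)` then gives `E K = xα/(β-1)` and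
`E K² = xα/(β-1) · ((x+1)(α+1)/(β-2) + 1)`. For `α = cπ(h)`, `β = c(1-π(h))` the mean and the
variance are `π(h)` times a function continuous at `π = 0`, and `π(h)/h → r(t)`.
-/

open MeasureTheory ProbabilityTheory
open scoped Nat

noncomputable def negBinomialCoeff (x : ℝ) (k : ℕ) : ℝ :=
  Real.Gamma (x + k) / (Real.Gamma x * k !)

lemma Real.Gamma_add_nat_eq_mul_ascPochhammer {x : ℝ} (hx : 0 < x) (k : ℕ) :
    Real.Gamma (x + k) = Real.Gamma x * (ascPochhammer ℝ k).eval x := by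
  induction k with
  | zero => simp
  | succ k ih =>
    rw [Nat.cast_succ, ← add_assoc, Real.Gamma_add_one (by positivity), ih,
      ascPochhammer_succ_eval]
    ring

lemma negBinomialCoeff_eq_choose {x : ℝ} (hx : 0 < x) (k : ℕ) :
    negBinomialCoeff x k = Ring.choose (x + k - 1) k := by
  rw [negBinomialCoeff, Real.Gamma_add_nat_eq_mul_ascPochhammer hx, ← Ring.multichoose_eq,
    ← Polynomial.ascPochhammer_smeval_eq_eval,
    ← Ring.factorial_nsmul_multichoose_eq_ascPochhammer, nsmul_eq_mul]
  have := (Real.Gamma_pos_of_pos hx).ne'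
  field_simp

lemma hasSum_negBinomialCoeff_mul_pow {x p : ℝ} (hx : 0 < x) (hp : |p| < 1) :
    HasSum (fun k => negBinomialCoeff x k * p ^ k) (1 / (1 - p) ^ x) := by
  have := (Real.one_div_one_sub_rpow_hasFPowerSeriesOnBall_zero x).hasSum (y := p) ?_
  · simpa [FormalMultilinearSeries.ofScalars_apply_eq, negBinomialCoeff_eq_choose hx, mul_comm]
      using this
  · simpa [enorm_eq_nnnorm, ← NNReal.coe_lt_coe] using hp

lemma negBinomialCoeff_pos {x : ℝ} (hx : 0 < x) (k : ℕ) : 0 < negBinomialCoeff x k :=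
  div_pos (Real.Gamma_pos_of_pos (by positivity))
    (mul_pos (Real.Gamma_pos_of_pos hx) (by positivity))

lemma hasSum_negBinomialCoeff_mul_pow_mul_one_sub_rpow {x p : ℝ} (hx : 0 < x) (hp : |p| < 1) :
    HasSum (fun k => negBinomialCoeff x k * p ^ k * (1 - p) ^ x) 1 := by
  have h1p : 0 < 1 - p := by linarith [le_abs_self p]
  simpa [(Real.rpow_pos_of_pos h1p x).ne'] using
    (hasSum_negBinomialCoeff_mul_pow hx hp).mul_right ((1 - p) ^ x)

lemma betaFn_pos {a b : ℝ} (ha : 0 < a) (hb : 0 < b) : 0 < betaFn a b :=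
  beta_pos ha hb

lemma lintegral_rpow_mul_one_sub_rpow {a b : ℝ} (ha : 0 < a) (hb : 0 < b) :
    ∫⁻ y in Set.Ioo 0 1, ENNReal.ofReal (y ^ (a - 1) * (1 - y) ^ (b - 1)) =
      ENNReal.ofReal (betaFn a b) := by
  have h := lintegral_betaPDF_eq_one ha hb
  rw [lintegral_betaPDF] at h
  simp_rw [mul_assoc, ENNReal.ofReal_mul (one_div_pos.2 (beta_pos ha hb)).le] at h
  rw [lintegral_const_mul' _ _ ENNReal.ofReal_ne_top, one_div,
    ENNReal.ofReal_inv_of_pos (beta_pos ha hb), mul_comm] at h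
  rw [ENNReal.eq_inv_of_mul_eq_one_left h, inv_inv]
  rfl

lemma hasSum_of_tsum_ofReal_eq {ι : Type*} {f : ι → ℝ} {a : ℝ} (hf : ∀ i, 0 ≤ f i)
    (ha : 0 ≤ a) (h : ∑' i, ENNReal.ofReal (f i) = ENNReal.ofReal a) : HasSum f a := by
  have := ENNReal.hasSum_toReal (h ▸ ENNReal.ofReal_ne_top)
  rw [← ENNReal.tsum_toReal_eq fun _ => ENNReal.ofReal_ne_top, h,
    ENNReal.toReal_ofReal ha] at this
  simpa only [ENNReal.toReal_ofReal (hf _)] using this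

lemma hasSum_negBinomialCoeff_mul_betaFn {x α β : ℝ} (hx : 0 < x) (hα : 0 < α)
    (hβ : 0 < β) :
    HasSum (fun k : ℕ => negBinomialCoeff x k * betaFn (k + α) (x + β)) (betaFn α β) := by
  refine hasSum_of_tsum_ofReal_eq (fun k => (mul_pos (negBinomialCoeff_pos hx k)
    (betaFn_pos (by positivity) (by positivity))).le) (betaFn_pos hα hβ).le ?_
  set w : ℝ → ℝ := fun y => y ^ (α - 1) * (1 - y) ^ (β - 1)
  have hterm (k : ℕ) : ENNReal.ofReal (negBinomialCoeff x k * betaFn (k + α) (x + β)) =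
      ∫⁻ y in Set.Ioo 0 1,
        ENNReal.ofReal (negBinomialCoeff x k * y ^ k * (1 - y) ^ x * w y) := by
    rw [ENNReal.ofReal_mul (negBinomialCoeff_pos hx k).le,
      ← lintegral_rpow_mul_one_sub_rpow (by positivity) (by positivity),
      ← lintegral_const_mul' _ _ ENNReal.ofReal_ne_top]
    refine setLIntegral_congr_fun measurableSet_Ioo fun y ⟨hy0, hy1⟩ => ?_
    rw [← ENNReal.ofReal_mul (negBinomialCoeff_pos hx k).le,
      show (k : ℝ) + α - 1 = k + (α - 1) by ring, Real.rpow_add hy0, Real.rpow_natCast,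
      show x + β - 1 = x + (β - 1) by ring, Real.rpow_add (by linarith)]
    congr 1
    ring
  have hpoint : ∀ y ∈ Set.Ioo (0 : ℝ) 1,
      ∑' k : ℕ, ENNReal.ofReal (negBinomialCoeff x k * y ^ k * (1 - y) ^ x * w y) =
        ENNReal.ofReal (w y) := by
    rintro y ⟨hy0, hy1⟩
    have hterm_nonneg (k : ℕ) : 0 ≤ negBinomialCoeff x k * y ^ k * (1 - y) ^ x * w y := by
      have := negBinomialCoeff_pos hx k
      have : 0 < 1 - y := by linarith
      positivity
    have hsum := (hasSum_negBinomialCoeff_mul_pow_mul_one_sub_rpow hx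
      (abs_lt.2 ⟨by linarith, hy1⟩)).mul_right (w y)
    rw [one_mul] at hsum
    rw [← ENNReal.ofReal_tsum_of_nonneg hterm_nonneg hsum.summable, hsum.tsum_eq]
  simp_rw [hterm]
  rw [← lintegral_tsum (fun k => by fun_prop), setLIntegral_congr_fun measurableSet_Ioo hpoint,
    lintegral_rpow_mul_one_sub_rpow hα hβ]

lemma bnbPmf_eq (x α β : ℝ) (k : ℕ) :
    bnbPmf x α β k = negBinomialCoeff x k * betaFn (k + α) (x + β) / betaFn α β :=
  (mul_div_assoc _ _ _).symm

lemma hasSum_bnbPmf {x α β : ℝ} (hx : 0 < x) (hα : 0 < α) (hβ : 0 < β) :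
    HasSum (bnbPmf x α β) 1 := by
  simpa [← bnbPmf_eq, (betaFn_pos hα hβ).ne'] using
    (hasSum_negBinomialCoeff_mul_betaFn hx hα hβ).div_const (betaFn α β)

lemma betaFn_add_one_sub_one {α β : ℝ} (hα : α ≠ 0) (hβ : β ≠ 1) :
    betaFn (α + 1) (β - 1) = α / (β - 1) * betaFn α β := by
  have hβ' : β - 1 ≠ 0 := sub_ne_zero.2 hβ
  have := Real.Gamma_add_one hβ'
  rw [sub_add_cancel] at this
  rw [betaFn, betaFn, Real.Gamma_add_one hα, this, show α + 1 + (β - 1) = α + β by ring]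
  field_simp

lemma succ_mul_negBinomialCoeff_succ {x : ℝ} (hx : 0 < x) (k : ℕ) :
    (k + 1) * negBinomialCoeff x (k + 1) = x * negBinomialCoeff (x + 1) k := by
  rw [negBinomialCoeff, negBinomialCoeff, Nat.factorial_succ, Nat.cast_succ, ← add_assoc,
    Real.Gamma_add_one hx.ne', add_right_comm x 1, Real.Gamma_add_one (by positivity)]
  have := (Real.Gamma_pos_of_pos hx).ne'
  push_cast
  field_simp

lemma succ_mul_bnbPmf_succ {x α β : ℝ} (hx : 0 < x) (hα : 0 < α) (hβ : 1 < β) (k : ℕ) :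
    (k + 1) * bnbPmf x α β (k + 1) = x * α / (β - 1) * bnbPmf (x + 1) (α + 1) (β - 1) k := by
  rw [bnbPmf_eq, bnbPmf_eq, betaFn_add_one_sub_one hα.ne' hβ.ne', ← mul_div_assoc,
    ← mul_assoc, succ_mul_negBinomialCoeff_succ hx, show x + 1 + (β - 1) = x + β by ring,
    Nat.cast_succ, add_right_comm, add_assoc]
  have := (betaFn_pos hα (by linarith : 0 < β)).ne'
  have : β - 1 ≠ 0 := by linarith
  field_simp

lemma hasSum_mul_bnbPmf {x α β : ℝ} (hx : 0 < x) (hα : 0 < α) (hβ : 1 < β) :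
    HasSum (fun k : ℕ => k * bnbPmf x α β k) (x * α / (β - 1)) := by
  rw [← hasSum_nat_add_iff' 1]
  simpa [succ_mul_bnbPmf_succ hx hα hβ] using
    (hasSum_bnbPmf (by linarith) (by linarith) (by linarith)).mul_left (x * α / (β - 1))

lemma hasSum_sq_mul_bnbPmf {x α β : ℝ} (hx : 0 < x) (hα : 0 < α) (hβ : 2 < β) :
    HasSum (fun k : ℕ => k ^ 2 * bnbPmf x α β k)
      (x * α / (β - 1) * ((x + 1) * (α + 1) / (β - 2) + 1)) := by
  rw [← hasSum_nat_add_iff' 1]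
  have hshift := ((hasSum_mul_bnbPmf (x := x + 1) (α := α + 1) (β := β - 1) (by linarith)
    (by linarith) (by linarith)).add
    (hasSum_bnbPmf (x := x + 1) (α := α + 1) (β := β - 1) (by linarith) (by linarith)
    (by linarith))).mul_left (x * α / (β - 1))
  rw [show β - 1 - 1 = β - 2 by ring] at hshift
  refine (hshift.congr_fun fun k => ?_).trans_eq ?_
  · rw [Nat.cast_succ, sq, mul_assoc, succ_mul_bnbPmf_succ hx hα (by linarith)]
    ring
  · simp

lemma pih_zero (r : ℝ → ℝ) (t : ℝ) : pih r t 0 = 0 := by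
  simp [pih]

lemma hasDerivAt_pih {r : ℝ → ℝ} (hr : Continuous r) (t : ℝ) :
    HasDerivAt (pih r t) (r t) 0 := by
  have hint : HasDerivAt (fun h => ∫ s in t..(t + h), r s) (r t) 0 :=
    HasDerivAt.comp_const_add t 0 (by simpa using (hr.integral_hasStrictDerivAt t t).hasDerivAt)
  have h := hint.neg.exp.const_sub 1
  simp only [Pi.neg_apply, add_zero, intervalIntegral.integral_same, neg_zero, Real.exp_zero,
    one_mul, neg_neg] at h
  exact h

lemma pih_pos {r : ℝ → ℝ} (hr : Continuous r) (hr_pos : ∀ s, 0 < r s) (t : ℝ) {h : ℝ}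
    (hh : 0 < h) : 0 < pih r t h := by
  have : 0 < ∫ s in t..(t + h), r s :=
    intervalIntegral.intervalIntegral_pos_of_pos (hr.intervalIntegrable _ _) hr_pos (by linarith)
  simpa [pih] using this

lemma tendsto_inv_mul_mul_comp {p g : ℝ → ℝ} {ρ : ℝ} (hp : HasDerivAt p ρ 0)
    (hp0 : p 0 = 0) (hg : ContinuousAt g 0) :
    Tendsto (fun h => h⁻¹ * (p h * g (p h))) (𝓝[≠] 0) (𝓝 (ρ * g 0)) := by
  have hslope : Tendsto (fun h => h⁻¹ * p h) (𝓝[≠] 0) (𝓝 ρ) := by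
    simpa [hp0] using hp.tendsto_slope_zero
  have hp_lim : Tendsto p (𝓝 0) (𝓝 0) := by simpa [hp0] using hp.continuousAt.tendsto
  have hgp : Tendsto (fun h => g (p h)) (𝓝[≠] 0) (𝓝 (g 0)) :=
    (hg.tendsto.comp hp_lim).mono_left nhdsWithin_le_nhds
  simpa only [mul_assoc] using hslope.mul hgp

section SmallSuccessProbability

variable {p : ℝ → ℝ} {ρ c x : ℝ}

lemma eventually_lt_mul_one_sub (hp : HasDerivAt p ρ 0) (hp0 : p 0 = 0) {b : ℝ} (hb : b < c) :
    ∀ᶠ h in 𝓝[>] 0, b < c * (1 - p h) := by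
  have hp_lim : Tendsto p (𝓝[>] 0) (𝓝 0) := by
    simpa [hp0] using hp.continuousAt.tendsto.mono_left nhdsWithin_le_nhds
  have hcont : ContinuousAt (fun q => c * (1 - q)) 0 := by fun_prop
  exact hp_lim.eventually (continuousAt_const.eventually_lt hcont (by simpa))

lemma tendsto_inv_mul_bnb_mean (hp : HasDerivAt p ρ 0) (hp0 : p 0 = 0)
    (hpos : ∀ᶠ h in 𝓝[>] 0, 0 < p h) (hc : 1 < c) (hx : 0 < x) :
    Tendsto (fun h => h⁻¹ * ∑' k : ℕ, k * bnbPmf x (c * p h) (c * (1 - p h)) k) (𝓝[>] 0)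
      (𝓝 (ρ * (x * c / (c - 1)))) := by
  have hlim := (tendsto_inv_mul_mul_comp hp hp0
    (g := fun q => x * c / (c * (1 - q) - 1)) (by fun_prop (disch := simp; linarith))
    ).mono_left (nhdsWithin_mono _ fun h (hh : 0 < h) => hh.ne')
  simp only [sub_zero, mul_one] at hlim
  refine hlim.congr' ?_
  filter_upwards [hpos, eventually_lt_mul_one_sub hp hp0 hc] with h hph hβ
  rw [(hasSum_mul_bnbPmf hx (by positivity) hβ).tsum_eq]
  field_simp

lemma tendsto_inv_mul_bnb_variance (hp : HasDerivAt p ρ 0) (hp0 : p 0 = 0)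
    (hpos : ∀ᶠ h in 𝓝[>] 0, 0 < p h) (hc : 2 < c) (hx : 0 < x) :
    Tendsto (fun h => h⁻¹ *
        ((∑' k : ℕ, (k : ℝ) ^ 2 * bnbPmf x (c * p h) (c * (1 - p h)) k)
          - (∑' k : ℕ, (k : ℝ) * bnbPmf x (c * p h) (c * (1 - p h)) k) ^ 2)) (𝓝[>] 0)
      (𝓝 (ρ * (x * c / (c - 1) * ((x + 1) / (c - 2) + 1)))) := by
  -- `E K = q m(q)` and `Var K = q m(q) ((x+1)(cq+1)/(c(1-q)-2) + 1 - q m(q))`,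
  -- where `m(q) = xc/(c(1-q)-1)`
  have hlim := (tendsto_inv_mul_mul_comp hp hp0
    (g := fun q => x * c / (c * (1 - q) - 1) *
      ((x + 1) * (c * q + 1) / (c * (1 - q) - 2) + 1 - q * (x * c / (c * (1 - q) - 1))))
    (by fun_prop (disch := simp; linarith))).mono_left
    (nhdsWithin_mono _ fun h (hh : 0 < h) => hh.ne')
  simp only [sub_zero, mul_one, mul_zero, zero_add, zero_mul] at hlim
  refine hlim.congr' ?_
  filter_upwards [hpos, eventually_lt_mul_one_sub hp hp0 hc] with h hph hβ
  rw [(hasSum_mul_bnbPmf hx (by positivity) (by linarith)).tsum_eq,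
    (hasSum_sq_mul_bnbPmf hx (by positivity) hβ).tsum_eq]
  have : c * (1 - p h) - 1 ≠ 0 := by linarith
  have : c * (1 - p h) - 2 ≠ 0 := by linarith
  field_simp

end SmallSuccessProbability

/-- for `x > 0`, `c > 2`, and `K_h ~ BNB(x, cπ(h), c(1−π(h)))`,
`lim_{h→0+} h⁻¹ E[K_h] = x r(t) c/(c−1)`,
`lim_{h→0+} h⁻¹ Var[K_h] = x² r(t) c/((c−1)(c−2)) + x r(t) c/(c−2)`, and the ratio of
these two limits is strictly greater than `1` (infinitesimal over-dispersion). -/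
theorem bnb_infinitesimal_dispersion
    (r : ℝ → ℝ) (hr_cont : Continuous r) (hr_pos : ∀ s, 0 < r s)
    (t c : ℝ) (hc : 2 < c) (x : ℝ) (hx : 0 < x) :
    Tendsto (fun h : ℝ => h⁻¹ *
        ∑' k : ℕ, (k : ℝ) * bnbPmf x (c * pih r t h) (c * (1 - pih r t h)) k)
      (𝓝[>] (0 : ℝ)) (𝓝 (x * r t * (c / (c - 1)))) ∧
    Tendsto (fun h : ℝ => h⁻¹ *
        ((∑' k : ℕ, (k : ℝ) ^ 2 * bnbPmf x (c * pih r t h) (c * (1 - pih r t h)) k)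
          - (∑' k : ℕ, (k : ℝ) * bnbPmf x (c * pih r t h) (c * (1 - pih r t h)) k) ^ 2))
      (𝓝[>] (0 : ℝ))
      (𝓝 (x ^ 2 * r t * (c / ((c - 1) * (c - 2))) + x * r t * (c / (c - 2)))) ∧
    1 < (x ^ 2 * r t * (c / ((c - 1) * (c - 2))) + x * r t * (c / (c - 2)))
          / (x * r t * (c / (c - 1))) := by
  have hderiv := hasDerivAt_pih hr_cont t
  have hpos : ∀ᶠ h in 𝓝[>] 0, 0 < pih r t h :=
    eventually_nhdsWithin_of_forall fun h hh => pih_pos hr_cont hr_pos t hh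
  have hc1 : c - 1 ≠ 0 := by linarith
  have hc2 : c - 2 ≠ 0 := by linarith
  have hrt := (hr_pos t).ne'
  refine ⟨?_, ?_, ?_⟩
  · convert tendsto_inv_mul_bnb_mean hderiv (pih_zero r t) hpos (one_lt_two.trans hc) hx
      using 2
    ring
  · convert tendsto_inv_mul_bnb_variance hderiv (pih_zero r t) hpos hc hx using 2
    field_simp
    ring
  · have hratio : (x ^ 2 * r t * (c / ((c - 1) * (c - 2))) + x * r t * (c / (c - 2)))
        / (x * r t * (c / (c - 1))) = (x + c - 1) / (c - 2) := by
      field_simp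
      ring
    rw [hratio, one_lt_div (by linarith)]
    linarith
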